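/- Let n ≥ 1 and let f : ℝⁿ → ℝⁿ be a continuous open map satisfying the growth condition with constant R' > 0. Suppose x ∉ I(f) and there exists δ > 0 such that every point y with 0 < ‖y − x‖ < 2δ belongs to I(f). Then there exists N ≥ 1 with f^N(x) = x, and every point of ℝⁿ \ {x} belongs to I(f). -/

import Mathlib

/-!
Escape happens at a uniform time on compact sets: by the growth condition the sets
`{y | R' < ‖f^[k] y‖}` increase with `k`, so finitely many cover the sphere `S = sphere x δ`,
and some `k ≥ 1` pushes all of `S` outside `closedBall 0 R'`. Non-escaping orbits stay in
`closedBall 0 R'`, in particular `f^[k] x` does. Since `f^[k]` is open, the frontier of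
`f^[k] '' ball x δ` lies in `f^[k] '' S`, which misses `closedBall 0 R'`; by connectedness the
whole closed ball lies in `f^[k] '' ball x δ`. So every non-escaping point `z` is `f^[k] w` for a
non-escaping `w ∈ ball x δ`, i.e. `w = x` and `z = f^[k] x`. Applied to `z = x` this makes `x`
periodic, and applied to any other `z` it shows `z = x`.
-/

open Filter Metric Set

/-- The escaping set `I(f)` of a map `f : ℝⁿ → ℝⁿ`:
points whose orbit under iteration tends to infinity. -/
def escapingSet {n : ℕ} (f : EuclideanSpace ℝ (Fin n) → EuclideanSpace ℝ (Fin n)) :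
    Set (EuclideanSpace ℝ (Fin n)) :=
  {x | Tendsto (fun k => ‖f^[k] x‖) atTop atTop}

/-- `f` satisfies the growth condition with constant `R' > 0` if
`‖f x‖ > 2‖x‖` whenever `‖x‖ > R'`. -/
def GrowthCondition {n : ℕ} (f : EuclideanSpace ℝ (Fin n) → EuclideanSpace ℝ (Fin n))
    (R' : ℝ) : Prop :=
  ∀ x, R' < ‖x‖ → 2 * ‖x‖ < ‖f x‖

open Function

theorem IsOpenMap.iterate {X : Type*} [TopologicalSpace X] {g : X → X} (hg : IsOpenMap g) :
    ∀ k : ℕ, IsOpenMap g^[k]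
  | 0 => IsOpenMap.id
  | k + 1 => (hg.iterate k).comp hg

theorem closedBall_subset_image_ball {E F : Type*} [PseudoMetricSpace E] [ProperSpace E]
    [NormedAddCommGroup F] [NormedSpace ℝ F] {g : E → F} (hg : Continuous g)
    (hgo : IsOpenMap g) {x : E} {δ r : ℝ} (hδ : 0 < δ) (hx : ‖g x‖ ≤ r)
    (hsphere : ∀ y ∈ sphere x δ, r < ‖g y‖) :
    closedBall 0 r ⊆ g '' ball x δ := by
  have hclosure : closure (g '' ball x δ) ⊆ g '' closedBall x δ :=
    closure_minimal (image_mono ball_subset_closedBall)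
      ((isCompact_closedBall x δ).image hg).isClosed
  refine (convex_closedBall (0 : F) r).isPreconnected.subset_of_closure_inter_subset
    (hgo _ isOpen_ball)
    ⟨g x, mem_closedBall_zero_iff.2 hx, mem_image_of_mem g (mem_ball_self hδ)⟩ ?_
  rintro _ ⟨hw, hwr⟩
  obtain ⟨u, hu, rfl⟩ := hclosure hw
  refine mem_image_of_mem g ((mem_closedBall.mp hu).lt_of_ne fun hux => ?_)
  exact (hsphere u hux).not_ge (mem_closedBall_zero_iff.1 hwr)

variable {n : ℕ} {f : EuclideanSpace ℝ (Fin n) → EuclideanSpace ℝ (Fin n)}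

theorem iterate_mem_escapingSet_iff (k : ℕ) {z : EuclideanSpace ℝ (Fin n)} :
    f^[k] z ∈ escapingSet f ↔ z ∈ escapingSet f := by
  simp only [escapingSet, mem_ofPred_eq, ← iterate_add_apply]
  exact tendsto_add_atTop_iff_nat (f := fun j => ‖f^[j] z‖) k

namespace GrowthCondition

variable {R' : ℝ}

theorem lt_norm_apply (hgrow : GrowthCondition f R') {y : EuclideanSpace ℝ (Fin n)}
    (hy : R' < ‖y‖) : R' < ‖f y‖ := by
  linarith [hgrow y hy, norm_nonneg y]

theorem two_pow_mul_lt_norm_iterate (hR' : 0 < R') (hgrow : GrowthCondition f R')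
    {z : EuclideanSpace ℝ (Fin n)} (hz : R' < ‖z‖) (j : ℕ) :
    2 ^ j * R' < ‖f^[j] z‖ := by
  induction j with
  | zero => simpa using hz
  | succ j ih =>
    have hR'_le : R' ≤ 2 ^ j * R' :=
      le_mul_of_one_le_left hR'.le (one_le_pow₀ one_le_two)
    rw [iterate_succ_apply', pow_succ']
    linarith [hgrow _ (hR'_le.trans_lt ih)]

theorem mem_escapingSet (hR' : 0 < R') (hgrow : GrowthCondition f R')
    {z : EuclideanSpace ℝ (Fin n)} (hz : R' < ‖z‖) : z ∈ escapingSet f :=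
  tendsto_atTop_mono (fun j => (hgrow.two_pow_mul_lt_norm_iterate hR' hz j).le)
    ((tendsto_pow_atTop_atTop_of_one_lt one_lt_two).atTop_mul_const hR')

theorem norm_iterate_le_of_notMem (hR' : 0 < R') (hgrow : GrowthCondition f R')
    {z : EuclideanSpace ℝ (Fin n)} (hz : z ∉ escapingSet f) (k : ℕ) : ‖f^[k] z‖ ≤ R' :=
  not_lt.1 fun h => hz ((iterate_mem_escapingSet_iff k).1 (hgrow.mem_escapingSet hR' h))

theorem eventually_forall_lt_norm_iterate (hgrow : GrowthCondition f R') (hf : Continuous f)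
    {K : Set (EuclideanSpace ℝ (Fin n))} (hK : IsCompact K) (hKI : K ⊆ escapingSet f) :
    ∀ᶠ k in atTop, ∀ y ∈ K, R' < ‖f^[k] y‖ := by
  set V : ℕ → Set (EuclideanSpace ℝ (Fin n)) := fun k => {y | R' < ‖f^[k] y‖}
  have hV_mono : Monotone V := monotone_nat_of_le_succ fun k y (hy : R' < ‖f^[k] y‖) => by
    simpa only [V, mem_ofPred_eq, iterate_succ_apply'] using hgrow.lt_norm_apply hy
  have hKV : K ⊆ ⋃ k, V k := fun y hy =>
    mem_iUnion.2 ((hKI hy).eventually (eventually_gt_atTop R')).exists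
  obtain ⟨m, hm⟩ := hK.elim_directed_cover V
    (fun k => isOpen_lt continuous_const (hf.iterate k).norm) hKV hV_mono.directed_le
  exact eventually_atTop.2 ⟨m, fun k hk y hy => hV_mono hk (hm hy)⟩

end GrowthCondition

theorem stmt_15_general (n : ℕ)
    (f : EuclideanSpace ℝ (Fin n) → EuclideanSpace ℝ (Fin n))
    (hf : Continuous f) (hopen : IsOpenMap f)
    (R' : ℝ) (hR' : 0 < R') (hgrow : GrowthCondition f R')
    (x : EuclideanSpace ℝ (Fin n)) (hx : x ∉ escapingSet f)
    (δ : ℝ) (hδ : 0 < δ)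
    (hpunct : ∀ y : EuclideanSpace ℝ (Fin n), 0 < ‖y - x‖ → ‖y - x‖ < 2 * δ →
      y ∈ escapingSet f) :
    (∃ N : ℕ, 1 ≤ N ∧ f^[N] x = x) ∧
      ∀ y : EuclideanSpace ℝ (Fin n), y ≠ x → y ∈ escapingSet f := by
  have hpunct' : ∀ y ∈ ball x (2 * δ), y ≠ x → y ∈ escapingSet f := fun y hy hyx =>
    hpunct y (norm_pos_iff.2 (sub_ne_zero.2 hyx)) (by rwa [← dist_eq_norm])
  have hsphere : sphere x δ ⊆ escapingSet f := fun y hy =>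
    hpunct' y (sphere_subset_ball (by linarith) hy) (ne_of_mem_sphere hy hδ.ne')
  obtain ⟨k, hk_sphere, hk⟩ := ((hgrow.eventually_forall_lt_norm_iterate hf
    (isCompact_sphere x δ) hsphere).and (eventually_ge_atTop 1)).exists
  have h_eq : ∀ z ∉ escapingSet f, z = f^[k] x := by
    intro z hz
    obtain ⟨w, hw, rfl⟩ := closedBall_subset_image_ball (hf.iterate k) (hopen.iterate k) hδ
      (hgrow.norm_iterate_le_of_notMem hR' hx k) hk_sphere
      (mem_closedBall_zero_iff.2 (hgrow.norm_iterate_le_of_notMem hR' hz 0))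
    by_contra hwx
    exact hz ((iterate_mem_escapingSet_iff k).2
      (hpunct' w (ball_subset_ball (by linarith) hw) (ne_of_apply_ne _ hwx)))
  refine ⟨⟨k, hk, (h_eq x hx).symm⟩, fun y hyx => by_contra fun hy => ?_⟩
  exact hyx ((h_eq y hy).trans (h_eq x hx).symm)

theorem stmt_15 (n : ℕ) (hn : 1 ≤ n)
    (f : EuclideanSpace ℝ (Fin n) → EuclideanSpace ℝ (Fin n))
    (hf : Continuous f) (hopen : IsOpenMap f)
    (R' : ℝ) (hR' : 0 < R') (hgrow : GrowthCondition f R')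
    (x : EuclideanSpace ℝ (Fin n)) (hx : x ∉ escapingSet f)
    (δ : ℝ) (hδ : 0 < δ)
    (hpunct : ∀ y : EuclideanSpace ℝ (Fin n), 0 < ‖y - x‖ → ‖y - x‖ < 2 * δ →
      y ∈ escapingSet f) :
    (∃ N : ℕ, 1 ≤ N ∧ f^[N] x = x) ∧
      ∀ y : EuclideanSpace ℝ (Fin n), y ≠ x → y ∈ escapingSet f :=
  stmt_15_general n f hf hopen R' hR' hgrow x hx δ hδ hpunct
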